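/- arXiv:2602.21060 — 2 statements merged into one kernel-verified Lean document; each statement's English description precedes it below -/
import Mathlib

section
/- Let f : R → S be a morphism of commutative rings such that the base change functor S ⊗_R (−) is faithful and exact. If f is both injective and an epimorphism in the category of commutative rings, then f is an isomorphism. -/
open TensorProduct

namespace Algebra.IsEpi

variable (R A : Type*) [CommRing R] [Ring A] [Algebra R A] [Algebra.IsEpi R A]

variable {A} in
theorem tmul_eq_mul_tmul_one (a b : A) : a ⊗ₜ[R] b = (a * b) ⊗ₜ[R] 1 :=
  calc a ⊗ₜ[R] b = a • (1 ⊗ₜ[R] b) := by rw [smul_tmul', smul_eq_mul, mul_one]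
    _ = a • (b ⊗ₜ[R] 1) := by rw [(isEpi_iff_forall_one_tmul_eq R A).mp ‹_› b]
    _ = (a * b) ⊗ₜ[R] 1 := by rw [smul_tmul', smul_eq_mul]

/-- Tensoring `R → A → A ⧸ R → 0` with `A` gives `A → A ⊗[R] A → A ⊗[R] (A ⧸ R) → 0`, whose first
map `a ↦ a ⊗ 1` is already surjective. -/
theorem subsingleton_tensor_quotient_range :
    Subsingleton (A ⊗[R] (A ⧸ LinearMap.range (Algebra.linearMap R A))) := by
  set N := LinearMap.range (Algebra.linearMap R A)
  have mkQ_one : N.mkQ 1 = 0 := (Submodule.Quotient.mk_eq_zero N).mpr ⟨1, map_one (algebraMap R A)⟩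
  refine subsingleton_of_forall_eq 0 fun x => ?_
  obtain ⟨y, rfl⟩ := LinearMap.lTensor_surjective A N.mkQ_surjective x
  induction y using TensorProduct.induction_on with
  | zero => exact map_zero _
  | tmul a b => rw [tmul_eq_mul_tmul_one, LinearMap.lTensor_tmul, mkQ_one, tmul_zero]
  | add y z hy hz => rw [map_add, hy, hz, add_zero]

end Algebra.IsEpi

theorem injective_epi_faithful_exact_baseChange_isIso_general
    (R S : Type) [CommRing R] [CommRing S] [Algebra R S]
    (hfaithful : ∀ (M : Type) [AddCommGroup M] [Module R M],
      Subsingleton (S ⊗[R] M) → Subsingleton M)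
    (hepi : CategoryTheory.Epi (CommRingCat.ofHom (algebraMap R S)))
    (hinj : Function.Injective (algebraMap R S)) :
    Function.Bijective (algebraMap R S) := by
  have : Algebra.IsEpi R S := CommRingCat.epi_iff_epi.mp hepi
  have hquot := hfaithful _ (Algebra.IsEpi.subsingleton_tensor_quotient_range R S)
  rw [Submodule.Quotient.subsingleton_iff, LinearMap.range_eq_top] at hquot
  exact ⟨hinj, hquot⟩

/-- If the base change functor `S ⊗_R (-)` is faithful and exact (i.e. `S` is flat
and tensoring reflects zero modules), and `f : R → S` is an injective epimorphism of
commutative rings, then `f` is an isomorphism. -/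
theorem injective_epi_faithful_exact_baseChange_isIso
    (R S : Type) [CommRing R] [CommRing S] [Algebra R S]
    [Module.Flat R S]
    (hfaithful : ∀ (M : Type) [AddCommGroup M] [Module R M],
      Subsingleton (S ⊗[R] M) → Subsingleton M)
    (hepi : CategoryTheory.Epi (CommRingCat.ofHom (algebraMap R S)))
    (hinj : Function.Injective (algebraMap R S)) :
    Function.Bijective (algebraMap R S) :=
  injective_epi_faithful_exact_baseChange_isIso_general R S hfaithful hepi hinj
end

section
/- Let f : R → S be a morphism of commutative rings. If f is an epimorphism in the category of commutative rings and S is faithfully flat over R via f, then f is an isomorphism. -/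
/-!
Faithfully flat descent says that `R` is the equalizer of the two maps `S ⇉ S ⊗[R] S`,
`s ↦ s ⊗ 1` and `s ↦ 1 ⊗ s` (and `R → S` is injective). For an epimorphism these two maps
coincide, so their equalizer is all of `S`.
-/

namespace Algebra

theorem IsEffective.surjective_algebraMap {R S : Type*} [CommSemiring R] [Ring S] [Algebra R S]
    [Algebra.IsEpi R S] (h : IsEffective R S) : Function.Surjective (algebraMap R S) := by
  intro s
  have hs : TensorProduct.includeLeftSubRight R S s = 0 := by
    rw [TensorProduct.includeLeftSubRight_apply, (isEpi_iff_forall_one_tmul_eq R S).mp ‹_› s,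
      sub_self]
  exact (h s).mp hs

theorem IsEpi.bijective_algebraMap_of_faithfullyFlat (R S : Type*) [CommRing R] [CommRing S]
    [Algebra R S] [Algebra.IsEpi R S] [Module.FaithfullyFlat R S] :
    Function.Bijective (algebraMap R S) :=
  ⟨FaithfulSMul.algebraMap_injective R S,
    (IsEffective.of_faithfullyFlat R S).surjective_algebraMap⟩

end Algebra

/-- A faithfully flat epimorphism of commutative rings is an isomorphism. -/
theorem faithfullyFlat_epi_isIso
    (R S : Type) [CommRing R] [CommRing S] [Algebra R S]
    [Module.FaithfullyFlat R S]
    (hepi : CategoryTheory.Epi (CommRingCat.ofHom (algebraMap R S))) :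
    Function.Bijective (algebraMap R S) := by
  have := CommRingCat.epi_iff_epi.mp hepi
  exact Algebra.IsEpi.bijective_algebraMap_of_faithfullyFlat R S
end
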